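/- arXiv:2305.09004 — 4 statements merged into one kernel-verified Lean document; each statement's English description precedes it below -/
import Mathlib

section
/- Let Σ : ℕ⁺ × ℕ⁺ → ℝ satisfy Σ(1,j) = 1/(2·(1+1)^(j-1)·1) = 1/2^j, Σ(i,j) = Σ(j,i), and Σ(i,j) = (Σ(i,j-1) + Σ(i-1,j))/2 for i,j ≥ 2. Then Σ(i,j) = Γ(i+j-1)/(2^(i+j-1)·Γ(i)·Γ(j)), i.e. Σ(i,j) = (i+j-2 choose i-1)/2^(i+j-1). -/
theorem stmt_1 (S : ℕ → ℕ → ℝ)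
    (hrow : ∀ j, 1 ≤ j → S 1 j = 1 / 2 ^ j)
    (hsym : ∀ i j, 1 ≤ i → 1 ≤ j → S i j = S j i)
    (hrec : ∀ i j, 2 ≤ i → 2 ≤ j → S i j = (S i (j - 1) + S (i - 1) j) / 2) :
    ∀ i j, 1 ≤ i → 1 ≤ j →
      S i j = (Nat.choose (i + j - 2) (i - 1) : ℝ) / 2 ^ (i + j - 1) := by
  have key : ∀ n i j, i + j = n → 1 ≤ i → 1 ≤ j →
      S i j = (Nat.choose (i + j - 2) (i - 1) : ℝ) / 2 ^ (i + j - 1) := by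
    intro n
    induction n using Nat.strong_induction_on with
    | _ n ih =>
      intro i j hn hi hj
      rcases Nat.lt_or_ge i 2 with h1 | h2
      · have : i = 1 := by omega
        subst this
        rw [hrow j hj]
        have h2' : 1 + j - 2 = j - 1 := by omega
        have h3' : 1 + j - 1 = j := by omega
        rw [h2', h3', Nat.choose_zero_right]
        norm_num
      rcases Nat.lt_or_ge j 2 with h3 | h4
      · have : j = 1 := by omega
        subst this
        rw [hsym i 1 hi hj, hrow i hi]
        have h2' : i + 1 - 2 = i - 1 := by omega
        have h3' : i + 1 - 1 = i := by omega
        rw [h2', h3', Nat.choose_self]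
        norm_num
      · obtain ⟨a, rfl⟩ : ∃ a, i = a + 2 := ⟨i - 2, by omega⟩
        obtain ⟨b, rfl⟩ : ∃ b, j = b + 2 := ⟨j - 2, by omega⟩
        rw [hrec _ _ h2 h4]
        have e1 : a + 2 - 1 = a + 1 := rfl
        have e2 : b + 2 - 1 = b + 1 := rfl
        rw [e1, e2,
          ih (a + 2 + (b + 1)) (by omega) (a + 2) (b + 1) rfl (by omega) (by omega),
          ih (a + 1 + (b + 2)) (by omega) (a + 1) (b + 2) rfl (by omega) (by omega)]
        have c1 : a + 2 + (b + 1) - 2 = a + b + 1 := by omega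
        have c2 : a + 2 + (b + 1) - 1 = a + b + 2 := by omega
        have c3 : a + 1 + (b + 2) - 2 = a + b + 1 := by omega
        have c4 : a + 1 + (b + 2) - 1 = a + b + 2 := by omega
        have c5 : a + 2 + (b + 2) - 2 = a + b + 2 := by omega
        have c6 : a + 2 + (b + 2) - 1 = a + b + 3 := by omega
        have c7 : a + 1 - 1 = a := rfl
        rw [c1, c2, c3, c4, c5, c6, c7, e1]
        have pascal : Nat.choose (a + b + 2) (a + 1)
            = Nat.choose (a + b + 1) a + Nat.choose (a + b + 1) (a + 1) := by
          simpa using Nat.choose_succ_succ (a + b + 1) a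
        rw [pascal]
        push_cast
        ring
  intro i j hi hj
  exact key (i + j) i j rfl hi hj
end

section
/- Let θ > 0 and define Σ(1,j) = 1/(2θ(1+θ)^(j-1)) and, for i,j ≥ 2, Σ(i,j) = Σ_{p=1}^{j-1} C(i+p-3, p-1)/(2^(i+p-1)·θ·(1+θ)^(j-p)) + Σ_{p=1}^{i-1} C(j+p-3, p-1)/(2^(j+p-1)·θ·(1+θ)^(i-p)). Then Σ(i,j) = (Σ(i-1,j) + Σ(i,j-1))/2 for all i,j ≥ 3. -/
/-- Proposed closed-form solution for `i, j ≥ 2`. -/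
noncomputable def SigGen (θ : ℝ) (i j : ℕ) : ℝ :=
  (∑ p ∈ Finset.Icc 1 (j - 1),
      (Nat.choose (i + p - 3) (p - 1) : ℝ) / (2 ^ (i + p - 1) * θ * (1 + θ) ^ (j - p))) +
  (∑ p ∈ Finset.Icc 1 (i - 1),
      (Nat.choose (j + p - 3) (p - 1) : ℝ) / (2 ^ (j + p - 1) * θ * (1 + θ) ^ (i - p)))

noncomputable def S1 (θ : ℝ) (i j : ℕ) : ℝ :=
  ∑ p ∈ Finset.Icc 1 (j - 1),
      (Nat.choose (i + p - 3) (p - 1) : ℝ) / (2 ^ (i + p - 1) * θ * (1 + θ) ^ (j - p))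

lemma sig_eq (θ : ℝ) (i j : ℕ) : SigGen θ i j = S1 θ i j + S1 θ j i := rfl

noncomputable def F (θ : ℝ) (a b : ℕ) : ℝ :=
  ∑ q ∈ Finset.range (b + 1),
      (Nat.choose (a + q) q : ℝ) / (2 ^ (a + q + 2) * θ * (1 + θ) ^ (b + 1 - q))

lemma S1_eq_F (θ : ℝ) (a b : ℕ) : S1 θ (a + 2) (b + 2) = F θ a b := by
  unfold S1 F
  rw [← Finset.Ico_add_one_right_eq_Icc, Finset.sum_Ico_eq_sum_range]
  apply Finset.sum_congr (by congr 1)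
  intro q hq
  have e1 : a + 2 + (1 + q) - 3 = a + q := by omega
  have e2 : 1 + q - 1 = q := by omega
  have e3 : a + 2 + (1 + q) - 1 = a + q + 2 := by omega
  have e4 : b + 2 - (1 + q) = b + 1 - q := by omega
  rw [e1, e2, e3, e4]

lemma F_rec (θ : ℝ) (hθ : θ ≠ 0) (h1 : (1 : ℝ) + θ ≠ 0) (a b : ℕ) :
    F θ (a + 1) (b + 1) = (F θ a (b + 1) + F θ (a + 1) b) / 2 := by
  unfold F
  rw [eq_div_iff (by norm_num : (2 : ℝ) ≠ 0), Finset.sum_mul,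
    Finset.sum_range_succ' (fun q => ((Nat.choose (a + 1 + q) q : ℝ) /
      (2 ^ (a + 1 + q + 2) * θ * (1 + θ) ^ (b + 1 + 1 - q))) * 2) (b + 1),
    Finset.sum_range_succ' (fun q => (Nat.choose (a + q) q : ℝ) /
      (2 ^ (a + q + 2) * θ * (1 + θ) ^ (b + 1 + 1 - q))) (b + 1)]
  have hterm : ∀ q ∈ Finset.range (b + 1),
      ((Nat.choose (a + 1 + (q + 1)) (q + 1) : ℝ) /
        (2 ^ (a + 1 + (q + 1) + 2) * θ * (1 + θ) ^ (b + 1 + 1 - (q + 1)))) * 2 =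
      (Nat.choose (a + (q + 1)) (q + 1) : ℝ) /
        (2 ^ (a + (q + 1) + 2) * θ * (1 + θ) ^ (b + 1 + 1 - (q + 1))) +
      (Nat.choose (a + 1 + q) q : ℝ) /
        (2 ^ (a + 1 + q + 2) * θ * (1 + θ) ^ (b + 1 - q)) := by
    intro q hq
    have h2 : b + 1 + 1 - (q + 1) = b + 1 - q := by omega
    have h3 : a + 1 + (q + 1) = (a + q + 1) + 1 := by omega
    have h4 : a + (q + 1) = a + q + 1 := by omega
    rw [h2, h3, h4, Nat.choose_succ_succ]
    push_cast
    have hx : (1 + θ) ^ (b + 1 - q) ≠ 0 := pow_ne_zero _ h1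
    have hp1 : (2 : ℝ) ^ (a + q + 1 + 1 + 2) ≠ 0 := by positivity
    have hp2 : (2 : ℝ) ^ (a + q + 1 + 2) ≠ 0 := by positivity
    have hp3 : (2 : ℝ) ^ (a + 1 + q + 2) ≠ 0 := by positivity
    field_simp
    ring
  rw [Finset.sum_congr rfl hterm, Finset.sum_add_distrib]
  have h0 : ((Nat.choose (a + 1 + 0) 0 : ℝ) /
      (2 ^ (a + 1 + 0 + 2) * θ * (1 + θ) ^ (b + 1 + 1 - 0))) * 2 =
      (Nat.choose (a + 0) 0 : ℝ) /
      (2 ^ (a + 0 + 2) * θ * (1 + θ) ^ (b + 1 + 1 - 0)) := by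
    simp only [Nat.choose_zero_right, Nat.cast_one, Nat.add_zero, Nat.sub_zero]
    have hx : (1 + θ) ^ (b + 1 + 1) ≠ 0 := pow_ne_zero _ h1
    have hp1 : (2 : ℝ) ^ (a + 1 + 2) ≠ 0 := by positivity
    have hp2 : (2 : ℝ) ^ (a + 2) ≠ 0 := by positivity
    field_simp
    ring
  rw [h0]
  ring

lemma S1_rec (θ : ℝ) (hθ : θ ≠ 0) (h1 : (1 : ℝ) + θ ≠ 0) (i j : ℕ)
    (hi : 3 ≤ i) (hj : 3 ≤ j) :
    S1 θ i j = (S1 θ (i - 1) j + S1 θ i (j - 1)) / 2 := by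
  obtain ⟨a, rfl⟩ : ∃ a, i = (a + 1) + 2 := ⟨i - 3, by omega⟩
  obtain ⟨b, rfl⟩ : ∃ b, j = (b + 1) + 2 := ⟨j - 3, by omega⟩
  have e1 : (a + 1) + 2 - 1 = a + 2 := by omega
  have e2 : (b + 1) + 2 - 1 = b + 2 := by omega
  rw [e1, e2, S1_eq_F, S1_eq_F, S1_eq_F, F_rec θ hθ h1]

theorem stmt_3 (θ : ℝ) (hθ : 0 < θ) (i j : ℕ) (hi : 3 ≤ i) (hj : 3 ≤ j) :
    SigGen θ i j = (SigGen θ (i - 1) j + SigGen θ i (j - 1)) / 2 := by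
  have hθ' : θ ≠ 0 := ne_of_gt hθ
  have h1 : (1 : ℝ) + θ ≠ 0 := by positivity
  rw [sig_eq, sig_eq, sig_eq, S1_rec θ hθ' h1 i j hi hj,
    S1_rec θ hθ' h1 j i hj hi]
  ring
end

section
/- Let θ > 0 and let Σ(i,j) be defined for 1 ≤ i ≤ j by Σ(1,1) = 1/(2θ), Σ(1,j) = Σ(1,j-1)/(1+θ), symmetry Σ(i,j) = Σ(j,i), and Σ(i,j) = (Σ(i,j-1) + Σ(i-1,j))/2 for 2 ≤ i ≤ j with (i,j) ≠ (i,i) handled via Σ(i,i) computed the same way. Then for all i < j: Σ(i,j) < Σ(i,j-1), and moreover if i > 1 then Σ(i-1,j) < Σ(i,j). -/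
theorem stmt_11 (θ : ℝ) (hθ : 0 < θ) (S : ℕ → ℕ → ℝ)
    (h11 : S 1 1 = 1 / (2 * θ))
    (hrow : ∀ j, 2 ≤ j → S 1 j = S 1 (j - 1) / (1 + θ))
    (hsym : ∀ i j, 1 ≤ i → 1 ≤ j → S i j = S j i)
    (hrec : ∀ i j, 2 ≤ i → 2 ≤ j → S i j = (S i (j - 1) + S (i - 1) j) / 2) :
    ∀ i j, 1 ≤ i → i < j →
      S i j < S i (j - 1) ∧ (1 < i → S (i - 1) j < S i j) := by
  have hθ1 : (0:ℝ) < 1 + θ := by linarith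
  -- positivity
  have hpos : ∀ n i j, i + j ≤ n → 1 ≤ i → 1 ≤ j → 0 < S i j := by
    intro n
    induction n with
    | zero => intro i j h hi hj; omega
    | succ n ih =>
      intro i j h hi hj
      rcases Nat.lt_or_ge i 2 with hi2 | hi2
      · have hi1 : i = 1 := by omega
        subst hi1
        rcases Nat.lt_or_ge j 2 with hj2 | hj2
        · have hj1 : j = 1 := by omega
          subst hj1
          rw [h11]; positivity
        · rw [hrow j hj2]
          have := ih 1 (j-1) (by omega) (by omega) (by omega)
          positivity
      · rcases Nat.lt_or_ge j 2 with hj2 | hj2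
        · have hj1 : j = 1 := by omega
          subst hj1
          rw [hsym i 1 hi (le_refl 1), hrow i hi2]
          have := ih 1 (i-1) (by omega) (by omega) (by omega)
          positivity
        · rw [hrec i j hi2 hj2]
          have h1 := ih i (j-1) (by omega) (by omega) (by omega)
          have h2 := ih (i-1) j (by omega) (by omega) (by omega)
          positivity
  have key : ∀ n i j, i + j ≤ n → 1 ≤ i → i < j →
      S i j < S i (j - 1) ∧ (1 < i → S (i - 1) j < S i j) := by
    intro n
    induction n with
    | zero => intro i j h hi hij; omega
    | succ n ih =>
      intro i j h hi hij
      rcases Nat.lt_or_ge i 2 with hi2 | hi2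
      · have hi1 : i = 1 := by omega
        subst hi1
        have hj2 : 2 ≤ j := by omega
        constructor
        · rw [hrow j hj2]
          have hp := hpos (j) 1 (j-1) (by omega) (by omega) (by omega)
          exact div_lt_self hp (by linarith)
        · intro hcon; omega
      · -- key inequality: S (i-1) j < S i (j-1)
        have hK : S (i-1) j < S i (j-1) := by
          rcases Nat.lt_or_ge j (i+2) with hj | hj
          · have hji : j = i + 1 := by omega
            subst hji
            have hii : S i i = S (i-1) i := by
              rw [hrec i i hi2 hi2, hsym i (i-1) (by omega) (by omega)]
              ring
            have hA := (ih (i-1) (i+1) (by omega) (by omega) (by omega)).1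
            simp only [Nat.add_sub_cancel] at hA ⊢
            rw [hii]
            exact hA
          · have hA := (ih (i-1) j (by omega) (by omega) (by omega)).1
            have hB := (ih i (j-1) (by omega) (by omega) (by omega)).2 (by omega)
            linarith
        have hrw := hrec i j hi2 (by omega)
        constructor
        · rw [hrw]; linarith
        · intro _; rw [hrw]; linarith
  intro i j hi hij
  exact key (i+j) i j le_rfl hi hij
end

section
/- With Σ as in the covariance recurrence (Σ(1,j) = 1/(2θ(1+θ)^(j-1)), symmetric, Σ(i,j) = (Σ(i,j-1)+Σ(i-1,j))/2 for i,j ≥ 2) and θ > 0, the diagonal is strictly decreasing: Σ(i+1,i+1) < Σ(i,i) for all i ≥ 2. -/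
theorem stmt_12 (θ : ℝ) (hθ : 0 < θ) (S : ℕ → ℕ → ℝ)
    (h11 : S 1 1 = 1 / (2 * θ))
    (hrow : ∀ j, 2 ≤ j → S 1 j = S 1 (j - 1) / (1 + θ))
    (hsym : ∀ i j, 1 ≤ i → 1 ≤ j → S i j = S j i)
    (hrec : ∀ i j, 2 ≤ i → 2 ≤ j → S i j = (S i (j - 1) + S (i - 1) j) / 2) :
    ∀ i, 2 ≤ i → S (i + 1) (i + 1) < S i i := by
  have hθ1 : (1:ℝ) < 1 + θ := by linarith
  -- positivity of row 1
  have hpos : ∀ j, 1 ≤ j → 0 < S 1 j := by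
    intro j hj
    induction j, hj using Nat.le_induction with
    | base => rw [h11]; positivity
    | succ j hj ih =>
      have h := hrow (j + 1) (by omega)
      simp only [Nat.add_sub_cancel] at h
      rw [h]
      positivity
  -- row 1 is strictly decreasing
  have hR1 : ∀ j, 1 ≤ j → S 1 (j + 1) < S 1 j := by
    intro j hj
    have h := hrow (j + 1) (by omega)
    simp only [Nat.add_sub_cancel] at h
    rw [h]
    exact div_lt_self (hpos j hj) hθ1
  -- joint induction: R i (row i decreasing past the diagonal) and Q i (anti-diagonal)
  have main : ∀ i, 1 ≤ i →
      (∀ j, i ≤ j → S i (j + 1) < S i j) ∧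
      (∀ j, i + 1 ≤ j → S i (j + 1) < S (i + 1) j) := by
    intro i hi
    induction i, hi using Nat.le_induction with
    | base =>
      refine ⟨hR1, ?_⟩
      intro j hj
      induction j, hj using Nat.le_induction with
      | base =>
        have h22 := hrec 2 2 (by omega) (by omega)
        norm_num at h22
        have hs := hsym 2 1 (by omega) (by omega)
        have : S 2 2 = S 1 2 := by rw [h22, hs]; ring
        rw [this]
        exact hR1 2 (by omega)
      | succ j hj ih =>
        have h := hrec 2 (j + 1) (by omega) (by omega)
        simp only [Nat.add_sub_cancel] at h
        norm_num at h
        have h2 := hR1 (j + 1) (by omega)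
        rw [h]
        linarith
    | succ i hi ih =>
      obtain ⟨hRi, hQi⟩ := ih
      have hRi1 : ∀ j, i + 1 ≤ j → S (i + 1) (j + 1) < S (i + 1) j := by
        intro j hj
        have h := hrec (i + 1) (j + 1) (by omega) (by omega)
        simp only [Nat.add_sub_cancel] at h
        have h2 := hQi j hj
        rw [h]
        linarith
      refine ⟨hRi1, ?_⟩
      intro j hj
      induction j, hj using Nat.le_induction with
      | base =>
        -- j = i + 2 : S (i+2) (i+2) = S (i+1) (i+2)
        have h := hrec (i + 2) (i + 2) (by omega) (by omega)
        simp only [Nat.add_sub_cancel, show i + 2 - 1 = i + 1 from rfl] at h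
        have hs := hsym (i + 2) (i + 1) (by omega) (by omega)
        have hdiag : S (i + 2) (i + 2) = S (i + 1) (i + 2) := by
          rw [h, hs]; ring
        have : i + 2 + 1 = i + 1 + 1 + 1 := by omega
        rw [show (i + 1 + 1 : ℕ) = i + 2 from rfl, hdiag]
        exact hRi1 (i + 2) (by omega)
      | succ j hj ih2 =>
        have h := hrec (i + 2) (j + 1) (by omega) (by omega)
        simp only [Nat.add_sub_cancel, show i + 2 - 1 = i + 1 from rfl] at h
        have h2 := hRi1 (j + 1) (by omega)
        rw [show (i + 1 + 1 : ℕ) = i + 2 from rfl] at ih2 ⊢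
        rw [h]
        linarith
  intro i hi
  obtain ⟨hRi, -⟩ := main i (by omega)
  have h := hrec (i + 1) (i + 1) (by omega) (by omega)
  simp only [Nat.add_sub_cancel] at h
  have hs := hsym (i + 1) i (by omega) (by omega)
  have hdiag : S (i + 1) (i + 1) = S i (i + 1) := by rw [h, hs]; ring
  rw [hdiag]
  exact hRi i le_rfl
end
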